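/- arXiv:2001.04089 — 3 statements merged into one kernel-verified Lean document; each statement's English description precedes it below -/
import Mathlib

section
/- Let B and B' be unital associative algebras over ℂ with B' having a countable basis, let M' be a simple B'-module, and let M be a B-module. Then M ⊗ M' is a simple (B ⊗ B')-module if and only if M is a simple B-module. -/
/-!
Schur's lemma makes `End_{B'} M'` a division algebra of countable dimension over `ℂ`, and then
Dixmier's argument forces it to be `ℂ`: a transcendental `x` would give the uncountable linearly
independent family `(x - a)⁻¹`. Jacobson density then lets `B'` act on any finite subset of `M'`
like an arbitrary `ℂ`-linear map, e.g. a projection onto one basis vector; applied to a nonzero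
element of an invariant subspace, this produces a nonzero pure tensor, which generates
`M ⊗ M'` when `M` is simple. Conversely, a `B`-submodule `N` of `M` yields the invariant
subspace `N ⊗ M'`, and since `M'` is faithfully flat over `ℂ` this is `0` or everything only
when `N` is.
-/

open TensorProduct Polynomial Cardinal

theorem Transcendental.linearIndependent_sub_inv_of_divisionRing {K D : Type*} [Field K]
    [DivisionRing D] [Algebra K D] {x : D} (H : Transcendental K x) :
    LinearIndependent K fun a ↦ (x - algebraMap K D a)⁻¹ := by
  classical
  have hnz (a : K) : x - algebraMap K D a ≠ 0 := fun h ↦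
    H ⟨X - C a, X_sub_C_ne_zero a, by simp [h]⟩
  refine linearIndependent_iff'.2 fun s m hm i hi ↦ ?_
  let p : K[X] := ∑ j ∈ s, C (m j) * ∏ k ∈ s.erase j, (X - C k)
  -- multiplying the relation by `∏ k ∈ s, (x - k)` on the right gives `aeval x p = 0`
  have hterm : ∀ j ∈ s, Polynomial.aeval x (C (m j) * ∏ k ∈ s.erase j, (X - C k)) =
      m j • (x - algebraMap K D j)⁻¹ * Polynomial.aeval x (∏ k ∈ s, (X - C k)) := fun j hj ↦ by
    rw [← s.mul_prod_erase _ hj, map_mul (Polynomial.aeval x) (X - C j), map_sub, aeval_X,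
      aeval_C, smul_mul_assoc, inv_mul_cancel_left₀ (hnz j), map_mul, aeval_C, Algebra.smul_def]
  have hp : Polynomial.aeval x p = 0 := by
    rw [map_sum, Finset.sum_congr rfl hterm, ← Finset.sum_mul, hm, zero_mul]
  have heval := congr(eval i $(transcendental_iff.1 H p hp))
  have hvanish : ∀ j ∈ s.erase i, m j * ∏ k ∈ s.erase j, (i - k) = 0 := fun j hj ↦
    mul_eq_zero_of_right _ <| Finset.prod_eq_zero
      (Finset.mem_erase_of_ne_of_mem (Finset.ne_of_mem_erase hj).symm hi) (sub_self i)
  simp only [p, eval_zero, eval_finsetSum, eval_mul, eval_C, eval_prod, eval_sub, eval_X] at heval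
  rw [← s.add_sum_erase _ hi, Finset.sum_eq_zero hvanish, add_zero] at heval
  exact eq_zero_of_ne_zero_of_mul_right_eq_zero (Finset.prod_ne_zero_iff.2 fun j hj ↦
    sub_ne_zero.2 (Finset.ne_of_mem_erase hj).symm) heval

theorem isAlgebraic_of_rank_le_aleph0 {K D : Type*} [Field K] [Uncountable K] [DivisionRing D]
    [Algebra K D] (h : Module.rank K D ≤ ℵ₀) (x : D) : IsAlgebraic K x := by
  by_contra H
  have := (Transcendental.linearIndependent_sub_inv_of_divisionRing H).cardinal_lift_le_rank.trans
    (lift_le_aleph0.2 h)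
  exact not_countable (mk_le_aleph0_iff.1 (lift_le_aleph0.1 this))

section

variable {K A M : Type*} [Field K] [Ring A] [Algebra K A] [AddCommGroup M] [Module K M]
  [Module A M] [IsScalarTower K A M] [IsSimpleModule A M]

theorem IsSimpleModule.rank_le_aleph0 (hA : Module.rank K A ≤ ℵ₀) : Module.rank K M ≤ ℵ₀ := by
  have := IsSimpleModule.nontrivial A M
  obtain ⟨m, hm⟩ := exists_ne (0 : M)
  have := LinearMap.lift_rank_le_of_surjective
    ((LinearMap.toSpanSingleton A M m).restrictScalars K) (toSpanSingleton_surjective A hm)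
  exact lift_le_aleph0.1 (this.trans (lift_le_aleph0.2 hA))

theorem IsSimpleModule.rank_end_le_aleph0 (hA : Module.rank K A ≤ ℵ₀) :
    Module.rank K (Module.End A M) ≤ ℵ₀ := by
  have := IsSimpleModule.nontrivial A M
  obtain ⟨m, hm⟩ := exists_ne (0 : M)
  let ev : Module.End A M →ₗ[K] M :=
    { toFun := fun φ ↦ φ m, map_add' := fun _ _ ↦ rfl, map_smul' := fun _ _ ↦ rfl }
  have hev : Function.Injective ev := by
    refine (injective_iff_map_eq_zero ev).2 fun φ hφ ↦ ?_
    by_contra hne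
    exact hm (LinearMap.injective_of_ne_zero hne (hφ.trans φ.map_zero.symm))
  have := LinearMap.lift_rank_le_of_injective ev hev
  exact lift_le_aleph0.1 (this.trans (lift_le_aleph0.2 (rank_le_aleph0 hA)))

theorem IsSimpleModule.algebraMap_end_surjective [IsAlgClosed K] [Uncountable K]
    (hA : Module.rank K A ≤ ℵ₀) : Function.Surjective (algebraMap K (Module.End A M)) := by
  classical
  have : Algebra.IsAlgebraic K (Module.End A M) :=
    ⟨isAlgebraic_of_rank_le_aleph0 (rank_end_le_aleph0 hA)⟩
  exact IsAlgClosed.algebraMap_bijective_of_isIntegral.2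

theorem IsSimpleModule.exists_smul_eq_on_finset [IsAlgClosed K] [Uncountable K]
    (hA : Module.rank K A ≤ ℵ₀) (f : M →ₗ[K] M) (s : Finset M) :
    ∃ a : A, ∀ m ∈ s, a • m = f m := by
  let f' : Module.End (Module.End A M) M :=
    { toFun := f
      map_add' := f.map_add
      map_smul' := fun φ m ↦ by
        obtain ⟨c, rfl⟩ := algebraMap_end_surjective hA φ
        simp }
  obtain ⟨a, ha⟩ := jacobson_density f' s
  exact ⟨a, fun m hm ↦ (ha m hm).symm⟩

end

section

variable {R V W : Type*} [CommRing R] [AddCommGroup V] [Module R V] [AddCommGroup W]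
  [Module R W] (N : Submodule R V)

theorem Submodule.range_rTensor_subtype_le_comap_rTensor {f : V →ₗ[R] V} (hf : N ≤ N.comap f) :
    LinearMap.range (N.subtype.rTensor W) ≤
      (LinearMap.range (N.subtype.rTensor W)).comap (f.rTensor W) := by
  rintro _ ⟨x, rfl⟩
  refine ⟨(f.restrict hf).rTensor W x, ?_⟩
  rw [← LinearMap.comp_apply, ← LinearMap.rTensor_comp, LinearMap.subtype_comp_restrict,
    LinearMap.domRestrict, LinearMap.rTensor_comp, LinearMap.comp_apply]

theorem Submodule.range_rTensor_subtype_le_comap_lTensor (g : W →ₗ[R] W) :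
    LinearMap.range (N.subtype.rTensor W) ≤
      (LinearMap.range (N.subtype.rTensor W)).comap (g.lTensor V) := by
  rintro _ ⟨x, rfl⟩
  exact ⟨g.lTensor N x, by rw [← LinearMap.comp_apply, ← LinearMap.comp_apply,
    LinearMap.rTensor_comp_lTensor, LinearMap.lTensor_comp_rTensor]⟩

variable [Module.FaithfullyFlat R W]

theorem Submodule.eq_bot_of_range_rTensor_subtype_eq_bot
    (h : LinearMap.range (N.subtype.rTensor W) = ⊥) : N = ⊥ := by
  have hinj := Module.Flat.rTensor_preserves_injective_linearMap (M := W) _ N.injective_subtype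
  have : Subsingleton (N ⊗[R] W) :=
    ⟨fun x y ↦ hinj (by simp only [LinearMap.range_eq_bot.1 h, LinearMap.zero_apply])⟩
  exact N.subsingleton_iff_eq_bot.1 (Module.FaithfullyFlat.rTensor_reflects_triviality R W N)

theorem Submodule.eq_top_of_range_rTensor_subtype_eq_top
    (h : LinearMap.range (N.subtype.rTensor W) = ⊤) : N = ⊤ := by
  have hker : LinearMap.ker (N.mkQ.rTensor W) = ⊤ := by
    rw [(rTensor_exact W (LinearMap.exact_subtype_mkQ N) N.mkQ_surjective).linearMap_ker_eq, h]
  have hsurj := LinearMap.rTensor_surjective W N.mkQ_surjective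
  have : Subsingleton ((V ⧸ N) ⊗[R] W) :=
    ⟨fun x y ↦ by
      obtain ⟨x, rfl⟩ := hsurj x
      obtain ⟨y, rfl⟩ := hsurj y
      simp only [LinearMap.ker_eq_top.1 hker, LinearMap.zero_apply]⟩
  exact Submodule.Quotient.subsingleton_iff.1
    (Module.FaithfullyFlat.rTensor_reflects_triviality R W (V ⧸ N))

end

theorem Submodule.exists_tmul_mem_of_forall_lTensor_mem {K V W A : Type*} [Field K]
    [AddCommGroup V] [Module K V] [AddCommGroup W] [Module K W] [Monoid A]
    [DistribMulAction A W] [SMulCommClass A K W]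
    (hdense : ∀ (f : W →ₗ[K] W) (s : Finset W), ∃ a : A, ∀ w ∈ s, a • w = f w)
    {P : Submodule K (V ⊗[K] W)}
    (hP : ∀ a : A, P ≤ P.comap ((DistribSMul.toLinearMap K W a).lTensor V)) (hne : P ≠ ⊥) :
    ∃ v ≠ 0, ∃ w ≠ 0, v ⊗ₜ[K] w ∈ P := by
  classical
  obtain ⟨z, hzP, hz⟩ := P.ne_bot_iff.1 hne
  let e := Module.Basis.ofVectorSpace K W
  obtain ⟨c, rfl⟩ := TensorProduct.eq_repr_basis_right e z
  obtain ⟨j, hj⟩ := (Finsupp.support_nonempty_iff (f := c)).2 (by rintro rfl; simp at hz)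
  -- an element of `A` acting as the projection onto the `j`-th basis line on the support of `c`
  obtain ⟨a, ha⟩ := hdense ((e.coord j).smulRight (e j)) (c.support.image e)
  refine ⟨c j, Finsupp.mem_support_iff.1 hj, e j, e.ne_zero j, ?_⟩
  convert mem_comap.1 (hP a hzP) using 1
  rw [Finsupp.sum, map_sum, Finset.sum_eq_single_of_mem j hj]
  · simp [ha (e j) (Finset.mem_image_of_mem e hj)]
  · intro i hi hij
    simp [ha (e i) (Finset.mem_image_of_mem e hi), hij]

theorem Submodule.eq_top_of_tmul_mem {K A B V W : Type*} [Field K] [Ring A] [Ring B]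
    [AddCommGroup V] [Module K V] [Module A V] [SMulCommClass A K V] [IsSimpleModule A V]
    [AddCommGroup W] [Module K W] [Module B W] [SMulCommClass B K W] [IsSimpleModule B W]
    {P : Submodule K (V ⊗[K] W)}
    (hA : ∀ a : A, P ≤ P.comap ((DistribSMul.toLinearMap K V a).rTensor W))
    (hB : ∀ b : B, P ≤ P.comap ((DistribSMul.toLinearMap K W b).lTensor V))
    {v : V} {w : W} (hv : v ≠ 0) (hw : w ≠ 0) (hvw : v ⊗ₜ[K] w ∈ P) : P = ⊤ := by
  rw [eq_top_iff, ← TensorProduct.span_tmul_eq_top, Submodule.span_le]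
  rintro _ ⟨x, y, rfl⟩
  obtain ⟨a, rfl⟩ := IsSimpleModule.toSpanSingleton_surjective A hv x
  obtain ⟨b, rfl⟩ := IsSimpleModule.toSpanSingleton_surjective B hw y
  simpa [DistribSMul.toLinearMap_apply] using hA a (hB b hvw)

theorem isSimpleModule_of_forall_rTensor_stable {R A V W : Type*} [CommRing R] [Ring A]
    [Algebra R A] [AddCommGroup V] [Module R V] [Module A V] [IsScalarTower R A V]
    [Nontrivial V] [AddCommGroup W] [Module R W] [Module.FaithfullyFlat R W]
    (h : ∀ P : Submodule R (V ⊗[R] W),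
      (∀ a : A, P ≤ P.comap ((DistribSMul.toLinearMap R V a).rTensor W)) →
      (∀ g : W →ₗ[R] W, P ≤ P.comap (g.lTensor V)) → P = ⊥ ∨ P = ⊤) :
    IsSimpleModule A V := by
  refine (isSimpleModule_iff A V).2 ⟨fun N ↦ ?_⟩
  let N' := N.restrictScalars R
  refine (h _ (fun a ↦ N'.range_rTensor_subtype_le_comap_rTensor fun v hv ↦ N.smul_mem a hv)
    N'.range_rTensor_subtype_le_comap_lTensor).imp (fun hP ↦ ?_) (fun hP ↦ ?_)
  · exact (Submodule.restrictScalars_eq_bot_iff R A V).1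
      (N'.eq_bot_of_range_rTensor_subtype_eq_bot hP)
  · exact (Submodule.restrictScalars_eq_top_iff R A V).1
      (N'.eq_top_of_range_rTensor_subtype_eq_top hP)

theorem stmt5_general (B B' M M' : Type*) [Ring B] [Algebra ℂ B] [Ring B'] [Algebra ℂ B']
    [AddCommGroup M] [Module ℂ M] [Module B M]
    [IsScalarTower ℂ B M]
    [AddCommGroup M'] [Module ℂ M'] [Module B' M']
    [IsScalarTower ℂ B' M']
    (ι : Type*) [Countable ι] (bas : Module.Basis ι ℂ B')
    [IsSimpleModule B' M'] :
    (Nontrivial (M ⊗[ℂ] M') ∧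
      ∀ P : Submodule ℂ (M ⊗[ℂ] M'),
        (∀ (b : B), ∀ z ∈ P,
          LinearMap.rTensor M' (DistribMulAction.toLinearMap ℂ M b) z ∈ P) →
        (∀ (b' : B'), ∀ z ∈ P,
          LinearMap.lTensor M (DistribMulAction.toLinearMap ℂ M' b') z ∈ P) →
        P = ⊥ ∨ P = ⊤)
      ↔ IsSimpleModule B M := by
  have := IsSimpleModule.nontrivial B' M'
  have : Uncountable ℂ := Complex.ofReal_injective.uncountable
  have hrank : Module.rank ℂ B' ≤ ℵ₀ := by
    rw [← lift_le_aleph0, ← bas.mk_eq_rank, lift_le_aleph0]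
    exact mk_le_aleph0
  rw [Module.FaithfullyFlat.nontrivial_tensorProduct_iff_left]
  constructor
  · rintro ⟨hM, hsimple⟩
    exact isSimpleModule_of_forall_rTensor_stable fun P hB hW ↦
      hsimple P hB fun b' ↦ hW (DistribSMul.toLinearMap ℂ M' b')
  · intro hM
    refine ⟨IsSimpleModule.nontrivial B M, fun P hB hB' ↦ (eq_or_ne P ⊥).imp_right fun hne ↦ ?_⟩
    obtain ⟨v, hv, w, hw, hvw⟩ := Submodule.exists_tmul_mem_of_forall_lTensor_mem
      (IsSimpleModule.exists_smul_eq_on_finset hrank) hB' hne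
    exact Submodule.eq_top_of_tmul_mem hB hB' hv hw hvw

/-- Let `B, B'` be unital associative `ℂ`-algebras with `B'` having a countable basis, let
`M'` be a simple `B'`-module and `M` a `B`-module.  Then `M ⊗ M'` is a simple
`(B ⊗ B')`-module (i.e. it is nonzero and its only `ℂ`-subspaces invariant under the
actions of `B` on the first factor and `B'` on the second are `⊥` and `⊤`) if and only
if `M` is a simple `B`-module. -/
theorem stmt5 (B B' M M' : Type*) [Ring B] [Algebra ℂ B] [Ring B'] [Algebra ℂ B']
    [AddCommGroup M] [Module ℂ M] [Module B M]
    [IsScalarTower ℂ B M] [SMulCommClass B ℂ M]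
    [AddCommGroup M'] [Module ℂ M'] [Module B' M']
    [IsScalarTower ℂ B' M'] [SMulCommClass B' ℂ M']
    (ι : Type*) [Countable ι] (bas : Module.Basis ι ℂ B')
    [IsSimpleModule B' M'] :
    (Nontrivial (M ⊗[ℂ] M') ∧
      ∀ P : Submodule ℂ (M ⊗[ℂ] M'),
        (∀ (b : B), ∀ z ∈ P,
          LinearMap.rTensor M' (DistribMulAction.toLinearMap ℂ M b) z ∈ P) →
        (∀ (b' : B'), ∀ z ∈ P,
          LinearMap.lTensor M (DistribMulAction.toLinearMap ℂ M' b') z ∈ P) →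
        P = ⊥ ∨ P = ⊤)
      ↔ IsSimpleModule B M :=
  stmt5_general B B' M M' ι bas
end

section
/- Every simple weight module over the Weyl superalgebra K_{m,n} is isomorphic, up to a parity change, to A(λ) for some λ ∈ ℂ^m, where a weight module is one on which d_1,...,d_m act diagonalizably. -/
/-! ### A concrete model of `A_{m,n}` and of the Witt superalgebra `W_{m,n}`

`A_{m,n} = ℂ[t₁^{±1},…,t_m^{±1}] ⊗ Λ(ξ₁,…,ξ_n)` has basis the monomials `t^α ξ_I`,
indexed by `AIdx m n = (Fin m → ℤ) × Finset (Fin n)`.  The Witt superalgebra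
`W_{m,n}` of superderivations of `A_{m,n}` has basis `t^α ξ_I d_i` and
`t^α ξ_I ∂/∂ξ_j` (`d_i = t_i ∂/∂t_i`), indexed by
`WIdx m n = (Fin m → ℤ) × Finset (Fin n) × (Fin m ⊕ Fin n)`. -/

/-- Inversion count: number of pairs `(a,b) ∈ I × J` with `a > b`. -/
def tauF {n : ℕ} (I J : Finset (Fin n)) : ℕ :=
  ((I ×ˢ J).filter fun p => p.2 < p.1).card

/-- The sign arising from `ξ_I · ξ_J = ε(I,J) ξ_{I ∪ J}`:  `(-1)^{τ(I,J)}` when `I, J`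
are disjoint and `0` otherwise. -/
noncomputable def epsF {n : ℕ} (I J : Finset (Fin n)) : ℂ :=
  if Disjoint I J then (-1 : ℂ) ^ tauF I J else 0

/-- Index set of the monomial basis `t^α ξ_I` of `A_{m,n}`. -/
abbrev AIdx (m n : ℕ) := (Fin m → ℤ) × Finset (Fin n)

/-- The underlying vector space of `A_{m,n}`. -/
abbrev ASp (m n : ℕ) := AIdx m n →₀ ℂ

/-- Index set of the basis `t^α ξ_I ∂` (`∂ = d_i` or `∂/∂ξ_j`) of `W_{m,n}`. -/
abbrev WIdx (m n : ℕ) := (Fin m → ℤ) × Finset (Fin n) × (Fin m ⊕ Fin n)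

/-- The underlying vector space of `W_{m,n}`. -/
abbrev WSp (m n : ℕ) := WIdx m n →₀ ℂ

/-- Product of two monomials of `A_{m,n}`. -/
noncomputable def mulMono {m n : ℕ} (u v : AIdx m n) : ASp m n :=
  epsF u.2 v.2 • Finsupp.single (u.1 + v.1, u.2 ∪ v.2) 1

/-- The (supercommutative) multiplication of `A_{m,n}`, as a bilinear map. -/
noncomputable def mulA (m n : ℕ) : ASp m n →ₗ[ℂ] ASp m n →ₗ[ℂ] ASp m n :=
  Finsupp.lsum ℂ fun u => LinearMap.toSpanSingleton ℂ _
    (Finsupp.lsum ℂ fun v => LinearMap.toSpanSingleton ℂ _ (mulMono u v))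

/-- A monomial of `A_{m,n}` multiplied with a basis element of `W_{m,n}`. -/
noncomputable def smulMonoW {m n : ℕ} (u : AIdx m n) (w : WIdx m n) : WSp m n :=
  epsF u.2 w.2.1 • Finsupp.single (u.1 + w.1, u.2 ∪ w.2.1, w.2.2) 1

/-- The action of `A_{m,n}` on `W_{m,n} = A_{m,n} Δ` by multiplication, bilinear. -/
noncomputable def smulAW (m n : ℕ) : ASp m n →ₗ[ℂ] WSp m n →ₗ[ℂ] WSp m n :=
  Finsupp.lsum ℂ fun u => LinearMap.toSpanSingleton ℂ _
    (Finsupp.lsum ℂ fun w => LinearMap.toSpanSingleton ℂ _ (smulMonoW u w))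

/-- The scalar produced when the derivation part `c` (`d_i` or `∂/∂ξ_j`) hits the
monomial `t^β ξ_J`. -/
noncomputable def dCoeff {m n : ℕ} (c : Fin m ⊕ Fin n) (β : Fin m → ℤ) (J : Finset (Fin n)) : ℂ :=
  match c with
  | Sum.inl i => (β i : ℂ)
  | Sum.inr j => if j ∈ J then (-1 : ℂ) ^ ((J.filter (· < j)).card) else 0

/-- The `ξ`-part of the monomial after applying the derivation part `c`. -/
def dSet {m n : ℕ} (c : Fin m ⊕ Fin n) (J : Finset (Fin n)) : Finset (Fin n) :=
  match c with
  | Sum.inl _ => J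
  | Sum.inr j => J.erase j

/-- The basis superderivation `t^α ξ_I ∂` (index `u`) applied to the monomial
`t^β ξ_J` (index `v`), as an element of `A_{m,n}`. -/
noncomputable def derMono {m n : ℕ} (u : WIdx m n) (v : AIdx m n) : ASp m n :=
  dCoeff u.2.2 v.1 v.2 • mulMono (u.1, u.2.1) (v.1, dSet u.2.2 v.2)

/-- The parity of a basis element `t^α ξ_I ∂` of `W_{m,n}`: `|I|` plus the parity of
the derivation part. -/
def parWIdx {m n : ℕ} (u : WIdx m n) : ℕ :=
  u.2.1.card + (match u.2.2 with | Sum.inl _ => 0 | Sum.inr _ => 1)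

/-- Attach a derivation part `b` to an element of `A_{m,n}`: `a ↦ a ∂_b`. -/
noncomputable def attachD {m n : ℕ} (b : Fin m ⊕ Fin n) : ASp m n →ₗ[ℂ] WSp m n :=
  Finsupp.lmapDomain ℂ ℂ (fun a => (a.1, a.2, b))

/-- The superbracket of two basis elements `x = t^α ξ_I ∂_a`, `y = t^β ξ_J ∂_b`:
`[x, y] = x(t^β ξ_J) ∂_b − (−1)^{|x||y|} y(t^α ξ_I) ∂_a`. -/
noncomputable def bracketMono {m n : ℕ} (u v : WIdx m n) : WSp m n :=
  attachD v.2.2 (derMono u (v.1, v.2.1)) -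
    ((-1 : ℂ) ^ (parWIdx u * parWIdx v)) • attachD u.2.2 (derMono v (u.1, u.2.1))

/-- The superbracket of `W_{m,n}`, as a bilinear map. -/
noncomputable def bracketW (m n : ℕ) : WSp m n →ₗ[ℂ] WSp m n →ₗ[ℂ] WSp m n :=
  Finsupp.lsum ℂ fun u => LinearMap.toSpanSingleton ℂ _
    (Finsupp.lsum ℂ fun v => LinearMap.toSpanSingleton ℂ _ (bracketMono u v))

/-- The `ℤ^m`-graded component `(W_{m,n})_α`, spanned by `t^α ξ_I d_i` and
`t^α ξ_I ∂/∂ξ_j`. -/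
noncomputable def Wgr (m n : ℕ) (α : Fin m → ℤ) : Submodule ℂ (WSp m n) :=
  Submodule.span ℂ
    {w | ∃ (I : Finset (Fin n)) (c : Fin m ⊕ Fin n), w = Finsupp.single (α, I, c) 1}

/-- The (`ℤ₂`-)homogeneous component of `W_{m,n}` of parity `p`. -/
noncomputable def Wpar (m n : ℕ) (p : ℕ) : Submodule ℂ (WSp m n) :=
  Submodule.span ℂ
    {w | ∃ u : WIdx m n, parWIdx u % 2 = p % 2 ∧ w = Finsupp.single u 1}

/-- The operator `d_i + λ_i` ingredient: the derivation `d_i = t_i ∂/∂t_i` of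
`A_{m,n}`, acting on the monomial `t^β ξ_J` by the scalar `β_i`. -/
noncomputable def dOpA (m n : ℕ) (i : Fin m) : Module.End ℂ (ASp m n) :=
  Finsupp.lsum ℂ fun u => LinearMap.toSpanSingleton ℂ _
    ((u.1 i : ℂ) • (Finsupp.single u 1 : ASp m n))

/-- The odd superderivation `∂/∂ξ_j` of `A_{m,n}`. -/
noncomputable def xiOpA (m n : ℕ) (j : Fin n) : Module.End ℂ (ASp m n) :=
  Finsupp.lsum ℂ fun u => LinearMap.toSpanSingleton ℂ _
    (if j ∈ u.2 then
      ((-1 : ℂ) ^ ((u.2.filter (· < j)).card)) •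
        (Finsupp.single (u.1, u.2.erase j) 1 : ASp m n)
     else 0)

/-- The homogeneous component of `A_{m,n}` of parity `q ∈ ℤ₂`. -/
noncomputable def Apar (m n : ℕ) (q : ZMod 2) : Submodule ℂ (ASp m n) :=
  Submodule.span ℂ
    {a | ∃ u : AIdx m n, ((u.2.card : ZMod 2) = q) ∧ a = Finsupp.single u 1}

/-! A simple weight module `V` contains a homogeneous joint eigenvector of the `d_i`
(the `d_i` are even), and applying the anticommuting, square-zero operators `∂/∂ξ_j` to it
as long as they act nontrivially yields a homogeneous weight vector `v` of weight `μ`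
killed by every `∂/∂ξ_j`. Then `a ↦ a v` is a `K_{m,n}`-homomorphism `A(μ) → V`. It is
surjective because `V` is simple, and injective because `A(μ)` is simple: a nonzero
submodule of `A(μ)` contains a monomial, since the monomials are separated by the joint
eigenvalues of the `d_i` and the `ξ_j ∂/∂ξ_j`, and hence contains `1`. The parity of `v`
is the parity shift. -/

section Algebra

variable {m n : ℕ}

lemma mulA_single_single (u v : AIdx m n) :
    mulA m n (Finsupp.single u 1) (Finsupp.single v 1) = mulMono u v := by
  simp [mulA]

lemma mulA_single_empty_single (α : Fin m → ℤ) (v : AIdx m n) :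
    mulA m n (Finsupp.single (α, ∅) 1) (Finsupp.single v 1) =
      Finsupp.single (α + v.1, v.2) 1 := by
  simp [mulA_single_single, mulMono, epsF, tauF]

lemma dOpA_apply (i : Fin m) (b : ASp m n) (w : AIdx m n) :
    dOpA m n i b w = w.1 i * b w := by
  induction b using Finsupp.induction_linear with
  | zero => simp
  | add f g hf hg => simp [hf, hg, mul_add]
  | single u c =>
    rcases eq_or_ne u w with rfl | h
    · simp [dOpA, mul_comm]
    · simp [dOpA, h]

lemma xiOpA_single (j : Fin n) (u : AIdx m n) :
    xiOpA m n j (Finsupp.single u 1) =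
      if j ∈ u.2 then
        ((-1 : ℂ) ^ (u.2.filter (· < j)).card) • Finsupp.single (u.1, u.2.erase j) 1
      else 0 := by
  simp [xiOpA]

lemma tauF_singleton_left (j : Fin n) (J : Finset (Fin n)) :
    tauF {j} J = (J.filter (· < j)).card := by
  rw [tauF, Finset.singleton_product, Finset.filter_map, Finset.card_map]
  rfl

lemma mulA_xi_xiOpA_single (j : Fin n) (u : AIdx m n) :
    mulA m n (Finsupp.single (0, {j}) 1) (xiOpA m n j (Finsupp.single u 1)) =
      if j ∈ u.2 then Finsupp.single u 1 else 0 := by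
  by_cases hj : j ∈ u.2
  · have hfilter : (u.2.erase j).filter (· < j) = u.2.filter (· < j) := by
      ext x
      simp only [Finset.mem_filter, Finset.mem_erase]
      exact ⟨fun h => ⟨h.1.2, h.2⟩, fun h => ⟨⟨h.2.ne, h.1⟩, h.2⟩⟩
    rw [xiOpA_single, if_pos hj, map_smul, mulA_single_single, mulMono, epsF,
      if_pos (Finset.disjoint_singleton_left.2 (Finset.notMem_erase j _)), tauF_singleton_left,
      hfilter, smul_smul, ← pow_add, ← two_mul, pow_mul, neg_one_sq, one_pow, one_smul, zero_add,
      Finset.singleton_union, Finset.insert_erase hj, if_pos hj]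
  · simp [xiOpA_single, hj]

lemma mulA_xi_xiOpA_apply (j : Fin n) (b : ASp m n) (w : AIdx m n) :
    mulA m n (Finsupp.single (0, {j}) 1) (xiOpA m n j b) w = if j ∈ w.2 then b w else 0 := by
  induction b using Finsupp.induction_linear with
  | zero => simp
  | add f g hf hg => split_ifs at hf hg ⊢ <;> simp [hf, hg]
  | single u c =>
    rw [← Finsupp.smul_single_one u c, map_smul, map_smul, Finsupp.smul_apply,
      mulA_xi_xiOpA_single]
    rcases eq_or_ne u w with rfl | h
    · split_ifs <;> simp
    · split_ifs <;> simp [h]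

/-- A `K_{m,n}`-submodule of `A(λ)`, for any `λ`. -/
structure IsDifferentialIdeal (K : Submodule ℂ (ASp m n)) : Prop where
  mulA_mem : ∀ a b, b ∈ K → mulA m n a b ∈ K
  dOpA_mem : ∀ i b, b ∈ K → dOpA m n i b ∈ K
  xiOpA_mem : ∀ j b, b ∈ K → xiOpA m n j b ∈ K

namespace IsDifferentialIdeal

variable {K : Submodule ℂ (ASp m n)}

/-- The monomials are the joint eigenvectors of the operators `d_i` and `ξ_j ∂/∂ξ_j`,
with pairwise distinct joint eigenvalues. -/
lemma exists_diagonal_separating (hK : IsDifferentialIdeal K) {b : ASp m n} (hb : b ∈ K)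
    {u v : AIdx m n} (huv : u ≠ v) :
    ∃ c ∈ K, ∃ f : AIdx m n → ℂ, (∀ w, c w = f w * b w) ∧ f u ≠ f v := by
  by_cases hα : u.1 = v.1
  · obtain ⟨j, hj⟩ : ∃ j, ¬(j ∈ u.2 ↔ j ∈ v.2) := by
      by_contra! h
      exact huv (Prod.ext hα (Finset.ext h))
    refine ⟨mulA m n (Finsupp.single (0, {j}) 1) (xiOpA m n j b),
      hK.mulA_mem _ _ (hK.xiOpA_mem j b hb), fun w => if j ∈ w.2 then 1 else 0,
      fun w => by simp only [mulA_xi_xiOpA_apply, ite_mul, one_mul, zero_mul], ?_⟩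
    by_cases hu : j ∈ u.2 <;> simp_all
  · obtain ⟨i, hi⟩ := Function.ne_iff.1 hα
    exact ⟨_, hK.dOpA_mem i b hb, fun w => w.1 i, dOpA_apply i b,
      fun h => hi (Int.cast_injective h)⟩

lemma exists_single_mem (hK : IsDifferentialIdeal K) {b : ASp m n} (hb : b ∈ K) (hb0 : b ≠ 0) :
    ∃ u, Finsupp.single u 1 ∈ K := by
  induction hN : b.support.card using Nat.strong_induction_on generalizing b with
  | _ N ih =>
    obtain ⟨u, hu⟩ := Finsupp.support_nonempty_iff.2 hb0
    by_cases hsingle : ∃ v ∈ b.support, v ≠ u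
    swap
    · have hbu : b = Finsupp.single u (b u) := Finsupp.support_subset_singleton.1 fun v hv =>
        Finset.mem_singleton.2 (not_not.1 fun h => hsingle ⟨v, hv, h⟩)
      refine ⟨u, ?_⟩
      have := K.smul_mem (b u)⁻¹ hb
      rwa [hbu, Finsupp.smul_single, smul_eq_mul, Finsupp.single_eq_same,
        inv_mul_cancel₀ (Finsupp.mem_support_iff.1 hu)] at this
    obtain ⟨v, hv, hvu⟩ := hsingle
    obtain ⟨c, hc, f, hcf, hf⟩ := hK.exists_diagonal_separating hb hvu.symm
    -- `c - f v • b` kills the coefficient at `v` and keeps the one at `u`.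
    have hb' : ∀ w, (c - f v • b) w = (f w - f v) * b w := fun w => by simp [hcf, sub_mul]
    have hsub : (c - f v • b).support ⊂ b.support := by
      refine Finset.ssubset_iff_of_subset (fun w hw => ?_) |>.2 ⟨v, hv, by simp [hb']⟩
      rw [Finsupp.mem_support_iff, hb'] at hw
      exact Finsupp.mem_support_iff.2 (right_ne_zero_of_mul hw)
    refine ih _ (hN ▸ Finset.card_lt_card hsub) (K.sub_mem hc (K.smul_mem _ hb)) ?_ rfl
    intro h
    have := hb' u
    rw [h, Finsupp.coe_zero, Pi.zero_apply, eq_comm, mul_eq_zero, sub_eq_zero] at this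
    exact this.elim hf (Finsupp.mem_support_iff.1 hu)

lemma single_empty_mem (hK : IsDifferentialIdeal K) (α : Fin m → ℤ) (I : Finset (Fin n))
    (hI : Finsupp.single (α, I) 1 ∈ K) : Finsupp.single (α, ∅) 1 ∈ K := by
  induction I using Finset.induction_on with
  | empty => exact hI
  | insert j I hj ih =>
    apply ih
    have := K.smul_mem ((-1 : ℂ) ^ ((insert j I).filter (· < j)).card)
      (hK.xiOpA_mem j _ hI)
    rwa [xiOpA_single, if_pos (Finset.mem_insert_self j I), smul_smul, ← pow_add, ← two_mul,
      pow_mul, neg_one_sq, one_pow, one_smul, Finset.erase_insert hj] at this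

/-- `A(λ)` is a simple `K_{m,n}`-module. -/
lemma eq_bot (hK : IsDifferentialIdeal K) (h1 : Finsupp.single (0, ∅) 1 ∉ K) : K = ⊥ := by
  by_contra hne
  obtain ⟨b, hb, hb0⟩ := Submodule.exists_mem_ne_zero_of_ne_bot hne
  obtain ⟨⟨α, I⟩, hu⟩ := hK.exists_single_mem hb hb0
  have := hK.mulA_mem (Finsupp.single (-α, ∅) 1) _ (hK.single_empty_mem α I hu)
  rw [mulA_single_empty_single, neg_add_cancel] at this
  exact h1 this

end IsDifferentialIdeal

end Algebra

lemma ZMod.two_eq_or_eq_add_one (x r : ZMod 2) : x = r ∨ x = r + 1 := by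
  revert x r
  decide

lemma mem_Apar_sup_Apar_add_one {m n : ℕ} (r : ZMod 2) (b : ASp m n) :
    b ∈ Apar m n r ⊔ Apar m n (r + 1) := by
  induction b using Finsupp.induction_linear with
  | zero => exact zero_mem _
  | add f g hf hg => exact add_mem hf hg
  | single u c =>
    have hu : Finsupp.single u c ∈ Apar m n (u.2.card : ZMod 2) := by
      rw [← Finsupp.smul_single_one]
      exact Submodule.smul_mem _ _ (Submodule.subset_span ⟨u, rfl, rfl⟩)
    rcases ZMod.two_eq_or_eq_add_one (u.2.card : ZMod 2) r with h | h <;> rw [h] at hu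
    exacts [Submodule.mem_sup_left hu, Submodule.mem_sup_right hu]

section Graded

variable {V : Type*} [AddCommGroup V] [Module ℂ V] {gV : ZMod 2 → Submodule ℂ V}

lemma IsCompl.disjoint_add_one (hcompl : IsCompl (gV 0) (gV 1)) (q : ZMod 2) :
    Disjoint (gV q) (gV (q + 1)) := by
  fin_cases q
  exacts [hcompl.disjoint, hcompl.disjoint.symm]

variable {m n : ℕ} {f : ASp m n →ₗ[ℂ] V} {p : ZMod 2}

lemma range_eq_sup_inf_of_map_Apar (hf : ∀ r, ∀ b ∈ Apar m n r, f b ∈ gV (p + r)) :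
    LinearMap.range f = (LinearMap.range f ⊓ gV 0) ⊔ (LinearMap.range f ⊓ gV 1) := by
  refine le_antisymm ?_ (sup_le inf_le_left inf_le_left)
  rintro _ ⟨b, rfl⟩
  obtain ⟨b₀, hb₀, b₁, hb₁, rfl⟩ := Submodule.mem_sup.1 (mem_Apar_sup_Apar_add_one p b)
  have h₀ := hf _ _ hb₀
  have h₁ := hf _ _ hb₁
  rw [CharTwo.add_self_eq_zero] at h₀
  rw [← add_assoc, CharTwo.add_self_eq_zero, zero_add] at h₁
  rw [map_add]
  exact add_mem (Submodule.mem_sup_left ⟨⟨b₀, rfl⟩, h₀⟩)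
    (Submodule.mem_sup_right ⟨⟨b₁, rfl⟩, h₁⟩)

lemma mem_Apar_of_map_mem (hcompl : IsCompl (gV 0) (gV 1))
    (hf : ∀ r, ∀ b ∈ Apar m n r, f b ∈ gV (p + r)) (hinj : Function.Injective f)
    {q : ZMod 2} {b : ASp m n} (hb : f b ∈ gV q) : b ∈ Apar m n (q + p) := by
  obtain ⟨b₀, hb₀, b₁, hb₁, rfl⟩ := Submodule.mem_sup.1 (mem_Apar_sup_Apar_add_one (q + p) b)
  have h₀ : f b₀ ∈ gV q := by
    simpa only [add_left_comm p q p, CharTwo.add_self_eq_zero, add_zero] using hf _ _ hb₀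
  have h₁ : f b₁ ∈ gV (q + 1) := by
    have := hf _ _ hb₁
    rwa [add_comm q p, ← add_assoc, ← add_assoc, CharTwo.add_self_eq_zero, zero_add] at this
  have h₁' : f b₁ ∈ gV q := by simpa [map_add] using sub_mem hb h₀
  obtain rfl : b₁ = 0 := hinj <| by
    rw [map_zero, ← Submodule.mem_bot ℂ]
    exact (hcompl.disjoint_add_one q).le_bot ⟨h₁', h₁⟩
  simpa using hb₀

end Graded

lemma exists_ne_zero_forall_apply_eq_smul {ι R V : Type*} [CommRing R] [AddCommGroup V]
    [Module R V] [Nontrivial V]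
    (D : ι → Module.End R V)
    (hwt : (⨆ μ : ι → R, ⨅ i, Module.End.eigenspace (D i) (μ i)) = ⊤) :
    ∃ (μ : ι → R) (w : V), w ≠ 0 ∧ ∀ i, D i w = μ i • w := by
  obtain ⟨μ, hμ⟩ : ∃ μ : ι → R, (⨅ i, Module.End.eigenspace (D i) (μ i)) ≠ ⊥ := by
    by_contra! h
    exact bot_ne_top (iSup_eq_bot.2 h ▸ hwt)
  obtain ⟨w, hw, hw0⟩ := Submodule.exists_mem_ne_zero_of_ne_bot hμ
  exact ⟨μ, w, hw0, fun i => Module.End.mem_eigenspace_iff.1 ((Submodule.mem_iInf _).1 hw i)⟩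

section WeightVectors

variable {ι V : Type*} [AddCommGroup V] [Module ℂ V]

/-- The homogeneous components of a joint eigenvector are joint eigenvectors. -/
lemma exists_homogeneous_forall_apply_eq_smul {gV : ZMod 2 → Submodule ℂ V}
    (hcompl : IsCompl (gV 0) (gV 1)) (D : ι → Module.End ℂ V)
    (hpD : ∀ i q, ∀ v ∈ gV q, D i v ∈ gV q) {μ : ι → ℂ} {w : V} (hw0 : w ≠ 0)
    (hw : ∀ i, D i w = μ i • w) :
    ∃ q v, v ≠ 0 ∧ v ∈ gV q ∧ ∀ i, D i v = μ i • v := by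
  obtain ⟨w₀, hw₀, w₁, hw₁, rfl⟩ := Submodule.mem_sup.1
    (hcompl.sup_eq_top ▸ Submodule.mem_top : w ∈ gV 0 ⊔ gV 1)
  have heigen : ∀ i, D i w₀ - μ i • w₀ = 0 ∧ D i w₁ - μ i • w₁ = 0 := fun i => by
    have hsum : (D i w₀ - μ i • w₀) + (D i w₁ - μ i • w₁) = 0 := by
      rw [← add_sub_add_comm, ← map_add, ← smul_add, hw i, sub_self]
    have h₀ : D i w₀ - μ i • w₀ = 0 := Submodule.disjoint_def.1 hcompl.disjoint _
      (sub_mem (hpD i 0 _ hw₀) (Submodule.smul_mem _ _ hw₀))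
      (eq_neg_of_add_eq_zero_left hsum ▸ neg_mem (sub_mem (hpD i 1 _ hw₁)
        (Submodule.smul_mem _ _ hw₁)))
    exact ⟨h₀, by rwa [h₀, zero_add] at hsum⟩
  by_cases h₀ : w₀ = 0
  · refine ⟨1, w₁, fun h₁ => hw0 (by rw [h₀, h₁, add_zero]), hw₁, fun i => ?_⟩
    exact sub_eq_zero.1 (heigen i).2
  · exact ⟨0, w₀, h₀, hw₀, fun i => sub_eq_zero.1 (heigen i).1⟩

/-- Apply the operators one at a time as long as they act nontrivially; by anticommutation
(and `X j ^ 2 = 0`) each step keeps the previously obtained vanishing. -/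
lemma exists_ne_zero_forall_apply_eq_zero_of_anticomm [Finite ι] (X : ι → Module.End ℂ V)
    (hXX : ∀ j j', X j * X j' + X j' * X j = 0) (P : V → Prop) (hP : ∀ j v, P v → P (X j v))
    {w : V} (hw0 : w ≠ 0) (hw : P w) :
    ∃ v, v ≠ 0 ∧ P v ∧ ∀ j, X j v = 0 := by
  have hanti : ∀ j k v, X k (X j v) = -X j (X k v) := fun j k v =>
    eq_neg_of_add_eq_zero_left (LinearMap.congr_fun (hXX k j) v)
  have hsq : ∀ j v, X j (X j v) = 0 := fun j v =>
    (smul_eq_zero.1 ((two_smul ℂ _).trans (LinearMap.congr_fun (hXX j j) v))).resolve_left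
      two_ne_zero
  classical
  have : Fintype ι := Fintype.ofFinite ι
  suffices key : ∀ (S : Finset ι) (w : V), w ≠ 0 → P w → (∀ j ∉ S, X j w = 0) →
      ∃ v, v ≠ 0 ∧ P v ∧ ∀ j, X j v = 0 from
    key Finset.univ w hw0 hw fun j hj => absurd (Finset.mem_univ j) hj
  intro S
  induction S using Finset.induction_on with
  | empty => exact fun w hw0 hw hS => ⟨w, hw0, hw, fun j => hS j (Finset.notMem_empty j)⟩
  | insert j S _ ih =>
    intro w hw0 hw hS
    by_cases hXw : X j w = 0
    · refine ih w hw0 hw fun k hk => ?_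
      rcases eq_or_ne k j with rfl | hkj
      · exact hXw
      · exact hS k (by simp [hk, hkj])
    · refine ih (X j w) hXw (hP j w hw) fun k hk => ?_
      rcases eq_or_ne k j with rfl | hkj
      · exact hsq k w
      · rw [hanti, hS k (by simp [hk, hkj]), map_zero, neg_zero]

end WeightVectors

section WeylHom

variable {m n : ℕ} {V : Type*} [AddCommGroup V] [Module ℂ V]

/-- `f` is a homomorphism of `K_{m,n}`-modules `A(μ) → V`. -/
structure IsWeylHom (am : ASp m n →ₗ[ℂ] Module.End ℂ V) (D : Fin m → Module.End ℂ V)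
    (X : Fin n → Module.End ℂ V) (μ : Fin m → ℂ) (f : ASp m n →ₗ[ℂ] V) : Prop where
  map_mulA : ∀ a b, f (mulA m n a b) = am a (f b)
  map_dOpA_add_smul : ∀ i b, f (dOpA m n i b + μ i • b) = D i (f b)
  map_xiOpA : ∀ j b, f (xiOpA m n j b) = X j (f b)

variable {am : ASp m n →ₗ[ℂ] Module.End ℂ V} {D : Fin m → Module.End ℂ V}
  {X : Fin n → Module.End ℂ V} {μ : Fin m → ℂ}

lemma isWeylHom_flip (hmul : ∀ a b : ASp m n, am (mulA m n a b) = am a * am b)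
    (hD : ∀ (i : Fin m) (a : ASp m n), D i * am a - am a * D i = am (dOpA m n i a))
    (hX : ∀ (j : Fin n) (u : AIdx m n),
      X j * am (Finsupp.single u 1)
          - ((-1 : ℂ) ^ u.2.card) • (am (Finsupp.single u 1) * X j)
        = am (xiOpA m n j (Finsupp.single u 1)))
    {v : V} (hvμ : ∀ i, D i v = μ i • v) (hvX : ∀ j, X j v = 0) :
    IsWeylHom am D X μ (am.flip v) where
  map_mulA a b := by simp [hmul]
  map_dOpA_add_smul i b := by
    have := LinearMap.congr_fun (hD i b) v
    simp only [LinearMap.sub_apply, Module.End.mul_apply, hvμ, map_smul] at this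
    simp [← this]
  map_xiOpA j b := by
    induction b using Finsupp.induction_linear with
    | zero => simp
    | add f g hf hg => simp only [map_add, hf, hg]
    | single u c =>
      have := LinearMap.congr_fun (hX j u) v
      simp only [LinearMap.sub_apply, LinearMap.smul_apply, Module.End.mul_apply, hvX,
        map_zero, smul_zero, sub_zero] at this
      rw [← Finsupp.smul_single_one u c, map_smul, map_smul, map_smul, LinearMap.flip_apply,
        LinearMap.flip_apply, map_smul, this]

lemma flip_apply_mem_of_mem_Apar {gV : ZMod 2 → Submodule ℂ V}
    (hpA : ∀ (u : AIdx m n) (q : ZMod 2), ∀ v ∈ gV q,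
      am (Finsupp.single u 1) v ∈ gV (q + (u.2.card : ZMod 2)))
    {p : ZMod 2} {v : V} (hv : v ∈ gV p) (r : ZMod 2) (b : ASp m n) (hb : b ∈ Apar m n r) :
    am.flip v b ∈ gV (p + r) := by
  refine (Submodule.span_le (p := (gV (p + r)).comap (am.flip v))).2 ?_ hb
  rintro _ ⟨u, rfl, rfl⟩
  exact hpA u p v hv

namespace IsWeylHom

variable {f : ASp m n →ₗ[ℂ] V}

lemma isDifferentialIdeal_ker (hf : IsWeylHom am D X μ f) :
    IsDifferentialIdeal (LinearMap.ker f) where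
  mulA_mem a b hb := by simp_all [hf.map_mulA]
  dOpA_mem i b hb := by
    have := hf.map_dOpA_add_smul i b
    simp_all
  xiOpA_mem j b hb := by simp_all [hf.map_xiOpA]

lemma injective (hf : IsWeylHom am D X μ f) (hf1 : f (Finsupp.single (0, ∅) 1) ≠ 0) :
    Function.Injective f :=
  LinearMap.ker_eq_bot.1 (hf.isDifferentialIdeal_ker.eq_bot hf1)

lemma surjective (hf : IsWeylHom am D X μ f) {gV : ZMod 2 → Submodule ℂ V} {p : ZMod 2}
    (hpar : ∀ r, ∀ b ∈ Apar m n r, f b ∈ gV (p + r))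
    (hsimp : ∀ P : Submodule ℂ V, P = (P ⊓ gV 0) ⊔ (P ⊓ gV 1) →
      (∀ a : ASp m n, ∀ v ∈ P, am a v ∈ P) →
      (∀ i : Fin m, ∀ v ∈ P, D i v ∈ P) →
      (∀ j : Fin n, ∀ v ∈ P, X j v ∈ P) →
      P = ⊥ ∨ P = ⊤)
    (hf1 : f (Finsupp.single (0, ∅) 1) ≠ 0) :
    Function.Surjective f := by
  rw [← LinearMap.range_eq_top]
  refine (hsimp _ (range_eq_sup_inf_of_map_Apar hpar) ?_ ?_ ?_).resolve_left ?_
  · rintro a _ ⟨b, rfl⟩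
    exact ⟨_, hf.map_mulA a b⟩
  · rintro i _ ⟨b, rfl⟩
    exact ⟨_, hf.map_dOpA_add_smul i b⟩
  · rintro j _ ⟨b, rfl⟩
    exact ⟨_, hf.map_xiOpA j b⟩
  · exact fun h => hf1 (LinearMap.range_eq_bot.1 h ▸ rfl)

lemma exists_linearEquiv (hf : IsWeylHom am D X μ f) (hbij : Function.Bijective f)
    {gV : ZMod 2 → Submodule ℂ V} (hcompl : IsCompl (gV 0) (gV 1)) {p : ZMod 2}
    (hpar : ∀ r, ∀ b ∈ Apar m n r, f b ∈ gV (p + r)) :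
    ∃ e : V ≃ₗ[ℂ] ASp m n,
      (∀ (a : ASp m n) (v : V), e (am a v) = mulA m n a (e v)) ∧
      (∀ (i : Fin m) (v : V), e (D i v) = dOpA m n i (e v) + μ i • e v) ∧
      (∀ (j : Fin n) (v : V), e (X j v) = xiOpA m n j (e v)) ∧
      (∀ q : ZMod 2, ∀ v ∈ gV q, e v ∈ Apar m n (q + p)) := by
  set E := LinearEquiv.ofBijective f hbij
  have hE : ∀ b, E b = f b := fun _ => rfl
  refine ⟨E.symm, fun a v => ?_, fun i v => ?_, fun j v => ?_, fun q v hv => ?_⟩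
  · rw [E.symm_apply_eq, hE, hf.map_mulA, ← hE, E.apply_symm_apply]
  · rw [E.symm_apply_eq, hE, hf.map_dOpA_add_smul, ← hE, E.apply_symm_apply]
  · rw [E.symm_apply_eq, hE, hf.map_xiOpA, ← hE, E.apply_symm_apply]
  · refine mem_Apar_of_map_mem hcompl hpar hbij.injective ?_
    rwa [← hE, E.apply_symm_apply]

end IsWeylHom

end WeylHom

/-- A `K_{m,n}`-module is a `ℤ₂`-graded space `V` with a unital associative action `am` of
`A_{m,n}`, and even operators `D i` and odd operators `X j` satisfying the defining
(super)relations of `K_{m,n}`; it is a weight module when `D 1, …, D m` act simultaneously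
diagonalizably, and simple when it is nonzero with no proper nonzero graded invariant
subspace. -/
theorem stmt13_general (m n : ℕ) (V : Type*) [AddCommGroup V] [Module ℂ V] [Nontrivial V]
    (gV : ZMod 2 → Submodule ℂ V) (hcompl : IsCompl (gV 0) (gV 1))
    (am : ASp m n →ₗ[ℂ] Module.End ℂ V)
    (D : Fin m → Module.End ℂ V) (X : Fin n → Module.End ℂ V)
    (hone : am (Finsupp.single (0, ∅) 1) = 1)
    (hmul : ∀ a b : ASp m n, am (mulA m n a b) = am a * am b)
    (hD : ∀ (i : Fin m) (a : ASp m n), D i * am a - am a * D i = am (dOpA m n i a))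
    (hX : ∀ (j : Fin n) (u : AIdx m n),
      X j * am (Finsupp.single u 1)
          - ((-1 : ℂ) ^ u.2.card) • (am (Finsupp.single u 1) * X j)
        = am (xiOpA m n j (Finsupp.single u 1)))
    (hDX : ∀ (i : Fin m) (j : Fin n), D i * X j = X j * D i)
    (hXX : ∀ j j' : Fin n, X j * X j' + X j' * X j = 0)
    (hpA : ∀ (u : AIdx m n) (q : ZMod 2), ∀ v ∈ gV q,
      am (Finsupp.single u 1) v ∈ gV (q + (u.2.card : ZMod 2)))
    (hpD : ∀ (i : Fin m) (q : ZMod 2), ∀ v ∈ gV q, D i v ∈ gV q)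
    (hpX : ∀ (j : Fin n) (q : ZMod 2), ∀ v ∈ gV q, X j v ∈ gV (q + 1))
    (hwt : (⨆ μ : Fin m → ℂ, ⨅ i : Fin m, Module.End.eigenspace (D i) (μ i)) = ⊤)
    (hsimp : ∀ P : Submodule ℂ V, P = (P ⊓ gV 0) ⊔ (P ⊓ gV 1) →
      (∀ a : ASp m n, ∀ v ∈ P, am a v ∈ P) →
      (∀ i : Fin m, ∀ v ∈ P, D i v ∈ P) →
      (∀ j : Fin n, ∀ v ∈ P, X j v ∈ P) →
      P = ⊥ ∨ P = ⊤) :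
    ∃ (lam : Fin m → ℂ) (par : ZMod 2) (e : V ≃ₗ[ℂ] ASp m n),
      (∀ (a : ASp m n) (v : V), e (am a v) = mulA m n a (e v)) ∧
      (∀ (i : Fin m) (v : V), e (D i v) = dOpA m n i (e v) + lam i • e v) ∧
      (∀ (j : Fin n) (v : V), e (X j v) = xiOpA m n j (e v)) ∧
      (∀ q : ZMod 2, ∀ v ∈ gV q, e v ∈ Apar m n (q + par)) := by
  obtain ⟨μ, w, hw0, hwμ⟩ := exists_ne_zero_forall_apply_eq_smul D hwt
  obtain ⟨q, w', hw'0, hw'q, hw'μ⟩ :=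
    exists_homogeneous_forall_apply_eq_smul hcompl D hpD hw0 hwμ
  obtain ⟨v, hv0, ⟨p, hvp, hvμ⟩, hvX⟩ := exists_ne_zero_forall_apply_eq_zero_of_anticomm X hXX
    (fun v => ∃ p, v ∈ gV p ∧ ∀ i, D i v = μ i • v)
    (fun j v ⟨p, hp, hμ⟩ => ⟨p + 1, hpX j p v hp, fun i => by
      rw [← Module.End.mul_apply, hDX, Module.End.mul_apply, hμ, map_smul]⟩)
    hw'0 ⟨q, hw'q, hw'μ⟩
  have hf := isWeylHom_flip hmul hD hX hvμ hvX
  have hf1 : am.flip v (Finsupp.single (0, ∅) 1) ≠ 0 := by simpa [hone] using hv0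
  have hpar := flip_apply_mem_of_mem_Apar hpA hvp
  exact ⟨μ, p, hf.exists_linearEquiv ⟨hf.injective hf1, hf.surjective hpar hsimp hf1⟩
    hcompl hpar⟩

/-- Every simple weight module over the Weyl superalgebra `K_{m,n}` is isomorphic,
up to a parity change, to `A(λ)` for some `λ ∈ ℂ^m`.  A `K_{m,n}`-module is a
`ℤ₂`-graded space `V` with a unital associative action `am` of `A_{m,n}`, and even
operators `D i` and odd operators `X j` satisfying the defining (super)relations of
`K_{m,n}`; it is a weight module when `D 1, …, D m` act simultaneously diagonalizably,
and simple when it is nonzero with no proper nonzero graded invariant subspace. -/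
theorem stmt13 (m n : ℕ) (V : Type*) [AddCommGroup V] [Module ℂ V] [Nontrivial V]
    (gV : ZMod 2 → Submodule ℂ V) (hcompl : IsCompl (gV 0) (gV 1))
    (am : ASp m n →ₗ[ℂ] Module.End ℂ V)
    (D : Fin m → Module.End ℂ V) (X : Fin n → Module.End ℂ V)
    (hone : am (Finsupp.single (0, ∅) 1) = 1)
    (hmul : ∀ a b : ASp m n, am (mulA m n a b) = am a * am b)
    (hD : ∀ (i : Fin m) (a : ASp m n), D i * am a - am a * D i = am (dOpA m n i a))
    (hX : ∀ (j : Fin n) (u : AIdx m n),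
      X j * am (Finsupp.single u 1)
          - ((-1 : ℂ) ^ u.2.card) • (am (Finsupp.single u 1) * X j)
        = am (xiOpA m n j (Finsupp.single u 1)))
    (hDD : ∀ i i' : Fin m, D i * D i' = D i' * D i)
    (hDX : ∀ (i : Fin m) (j : Fin n), D i * X j = X j * D i)
    (hXX : ∀ j j' : Fin n, X j * X j' + X j' * X j = 0)
    (hpA : ∀ (u : AIdx m n) (q : ZMod 2), ∀ v ∈ gV q,
      am (Finsupp.single u 1) v ∈ gV (q + (u.2.card : ZMod 2)))
    (hpD : ∀ (i : Fin m) (q : ZMod 2), ∀ v ∈ gV q, D i v ∈ gV q)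
    (hpX : ∀ (j : Fin n) (q : ZMod 2), ∀ v ∈ gV q, X j v ∈ gV (q + 1))
    (hwt : (⨆ μ : Fin m → ℂ, ⨅ i : Fin m, Module.End.eigenspace (D i) (μ i)) = ⊤)
    (hsimp : ∀ P : Submodule ℂ V, P = (P ⊓ gV 0) ⊔ (P ⊓ gV 1) →
      (∀ a : ASp m n, ∀ v ∈ P, am a v ∈ P) →
      (∀ i : Fin m, ∀ v ∈ P, D i v ∈ P) →
      (∀ j : Fin n, ∀ v ∈ P, X j v ∈ P) →
      P = ⊥ ∨ P = ⊤) :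
    ∃ (lam : Fin m → ℂ) (par : ZMod 2) (e : V ≃ₗ[ℂ] ASp m n),
      (∀ (a : ASp m n) (v : V), e (am a v) = mulA m n a (e v)) ∧
      (∀ (i : Fin m) (v : V), e (D i v) = dOpA m n i (e v) + lam i • e v) ∧
      (∀ (j : Fin n) (v : V), e (X j v) = xiOpA m n j (e v)) ∧
      (∀ q : ZMod 2, ∀ v ∈ gV q, e v ∈ Apar m n (q + par)) :=
  stmt13_general m n V gV hcompl am D X hone hmul hD hX hDX hXX hpA hpD hpX hwt hsimp
end

section
/- Suppose M is a simple weight module over the Witt superalgebra W = W_{m,n} (m > 1) with finite-dimensional weight spaces, λ ∈ supp(M), and w ∈ M_λ is a nonzero vector with W_{e_i}·w = 0 for i = 1,...,m. Then the set M' = {v ∈ M : ∃ N ∈ ℕ such that W_α v = 0 for all α ∈ ℤ^m with α_i > N for all i} is a nonzero W-submodule of M, hence equals M. -/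
/-- The Cartan element `d_i = t_i ∂/∂t_i` of `W_{m,n}`. -/
noncomputable def dEl (m n : ℕ) (i : Fin m) : WSp m n :=
  Finsupp.single (0, ∅, Sum.inl i) 1

/-!
With `x_{α,I,c} = t^α ξ_I ∂_c`, the bracket
`[t^β d_i, x_{γ,I,c}] = γ_i x_{β+γ,I,c} - β_c x_{β+γ,I,d_i}` (where `β_c = 0` for odd `∂_c`)
shows: if `W_β w = 0`, `W_{e_j} w = 0` and `β_k ≠ 0` for some `k ≠ j`, then `W_{β+e_j} w = 0`.
Since `m > 1`, starting from `e_{i₀} + e_{i₁}` this reaches every `α` with all `α_i ≥ 2`, so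
`w ∈ M'`. The identity `x y v = [x, y] v ± y x v` together with `[W_α, W_β] ⊆ W_{α+β}` makes `M'`
stable under `W`, and `M'` is `ℤ₂`-graded because each `x_{α,I,c}` is homogeneous.
Simplicity then forces `M' = M`.
-/

section Bracket

variable {m n : ℕ}

lemma epsF_empty_left (J : Finset (Fin n)) : epsF ∅ J = 1 := by
  simp [epsF, tauF]

lemma epsF_empty_right (I : Finset (Fin n)) : epsF I ∅ = 1 := by
  simp [epsF, tauF]

lemma attachD_single (b : Fin m ⊕ Fin n) (a : AIdx m n) (c : ℂ) :
    attachD b (Finsupp.single a c) = Finsupp.single (a.1, a.2, b) c := by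
  simp [attachD, Finsupp.mapDomain_single]

lemma bracketW_single_single (u v : WIdx m n) :
    bracketW m n (Finsupp.single u 1) (Finsupp.single v 1) = bracketMono u v := by
  simp [bracketW]

lemma single_mem_Wgr (α : Fin m → ℤ) (I : Finset (Fin n)) (c : Fin m ⊕ Fin n) :
    Finsupp.single (α, I, c) (1 : ℂ) ∈ Wgr m n α :=
  Submodule.subset_span ⟨I, c, rfl⟩

lemma single_mem_Wpar (u : WIdx m n) : Finsupp.single u (1 : ℂ) ∈ Wpar m n (parWIdx u) :=
  Submodule.subset_span ⟨u, rfl, rfl⟩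

lemma bracketMono_eq (u v : WIdx m n) :
    bracketMono u v =
      (dCoeff u.2.2 v.1 v.2.1 * epsF u.2.1 (dSet u.2.2 v.2.1)) •
        Finsupp.single (u.1 + v.1, u.2.1 ∪ dSet u.2.2 v.2.1, v.2.2) 1
      - ((-1 : ℂ) ^ (parWIdx u * parWIdx v) *
          (dCoeff v.2.2 u.1 u.2.1 * epsF v.2.1 (dSet v.2.2 u.2.1))) •
        Finsupp.single (u.1 + v.1, v.2.1 ∪ dSet v.2.2 u.2.1, u.2.2) 1 := by
  simp only [bracketMono, derMono, mulMono, map_smul, attachD_single, smul_smul]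
  rw [add_comm v.1 u.1]

lemma bracketMono_mem_Wgr (u v : WIdx m n) : bracketMono u v ∈ Wgr m n (u.1 + v.1) := by
  rw [bracketMono_eq]
  exact sub_mem (Submodule.smul_mem _ _ (single_mem_Wgr _ _ _))
    (Submodule.smul_mem _ _ (single_mem_Wgr _ _ _))

lemma bracketMono_inl_empty (β γ : Fin m → ℤ) (i : Fin m) (I : Finset (Fin n))
    (c : Fin m ⊕ Fin n) :
    bracketMono (β, ∅, Sum.inl i) (γ, I, c) =
      (γ i : ℂ) • Finsupp.single (β + γ, I, c) 1
      - dCoeff c β ∅ • Finsupp.single (β + γ, I, Sum.inl i) 1 := by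
  rw [bracketMono_eq]
  cases c <;> simp [dSet, dCoeff, parWIdx, epsF_empty_left, epsF_empty_right]

end Bracket

lemma Pi.mem_of_le_of_add_single_mem {ι : Type*} [Finite ι] [DecidableEq ι] {S : Set (ι → ℤ)}
    (hS : ∀ β ∈ S, ∀ j, β + Pi.single j 1 ∈ S) {β α : ι → ℤ} (hβ : β ∈ S) (hβα : β ≤ α) :
    α ∈ S := by
  suffices h : ∀ (δ : ι → ℕ), ∀ β ∈ S, (β + fun i => (δ i : ℤ)) ∈ S by
    convert h (fun i => (α i - β i).toNat) β hβ using 1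
    funext i
    have : β i ≤ α i := hβα i
    show α i = β i + ((α i - β i).toNat : ℤ)
    omega
  intro δ
  induction δ using Pi.single_induction with
  | zero =>
    intro β hβ
    convert hβ using 1
    funext i
    simp
  | add f g hf hg =>
    intro β hβ
    convert hg _ (hf β hβ) using 1
    funext i
    simp only [Pi.add_apply, Nat.cast_add]
    ring
  | single j k =>
    induction k with
    | zero =>
    intro β hβ
    convert hβ using 1
    funext i
    simp
    | succ k ih =>
      intro β hβ
      convert hS _ (ih β hβ) j using 1
      funext i
      by_cases hij : i = j
      · subst hij; simp only [Pi.add_apply, Pi.single_eq_same]; push_cast; ring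
      · simp [Pi.single_eq_of_ne hij]

section Representation

variable {m n : ℕ} {V : Type*} [AddCommGroup V] [Module ℂ V]

def IsSuperRep (ρ : WSp m n →ₗ[ℂ] Module.End ℂ V) : Prop :=
  ∀ (p q : ℕ) (x y : WSp m n), x ∈ Wpar m n p → y ∈ Wpar m n q →
    ρ (bracketW m n x y) = ρ x * ρ y - ((-1 : ℂ) ^ (p * q)) • (ρ y * ρ x)

/-- `W_α v = 0`. -/
def AnnihilatedBy (ρ : WSp m n →ₗ[ℂ] Module.End ℂ V) (α : Fin m → ℤ) (v : V) : Prop :=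
  ∀ (I : Finset (Fin n)) (c : Fin m ⊕ Fin n), ρ (Finsupp.single (α, I, c) 1) v = 0

/-- The submodule `M'`. -/
def eventuallyAnnihilated (ρ : WSp m n →ₗ[ℂ] Module.End ℂ V) : Submodule ℂ V where
  carrier := {v | ∃ N : ℕ, ∀ α : Fin m → ℤ, (∀ i, (N : ℤ) < α i) → AnnihilatedBy ρ α v}
  zero_mem' := ⟨0, fun _ _ _ _ => map_zero _⟩
  add_mem' := by
    rintro a b ⟨Na, ha⟩ ⟨Nb, hb⟩
    refine ⟨Na + Nb, fun α hα I c => ?_⟩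
    have hαa : ∀ i, (Na : ℤ) < α i := fun i => by have := hα i; omega
    have hαb : ∀ i, (Nb : ℤ) < α i := fun i => by have := hα i; omega
    rw [map_add, ha α hαa I c, hb α hαb I c, add_zero]
  smul_mem' := by
    rintro b v ⟨N, h⟩
    exact ⟨N, fun α hα I c => by rw [map_smul, h α hα I c, smul_zero]⟩

variable {ρ : WSp m n →ₗ[ℂ] Module.End ℂ V}

lemma annihilatedBy_iff {α : Fin m → ℤ} {v : V} :
    AnnihilatedBy ρ α v ↔ ∀ x ∈ Wgr m n α, ρ x v = 0 := by
  refine ⟨fun h x hx => ?_, fun h I c => h _ (single_mem_Wgr α I c)⟩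
  induction hx using Submodule.span_induction with
  | mem y hy => obtain ⟨I, c, rfl⟩ := hy; exact h I c
  | zero => simp
  | add y z _ _ hy hz => simp [hy, hz]
  | smul b y _ hy => simp [hy]

lemma single_apply_single_apply (hρ : IsSuperRep ρ) (u v : WIdx m n) (y : V) :
    ρ (Finsupp.single u 1) (ρ (Finsupp.single v 1) y) =
      ρ (bracketMono u v) y + ((-1 : ℂ) ^ (parWIdx u * parWIdx v)) •
        ρ (Finsupp.single v 1) (ρ (Finsupp.single u 1) y) := by
  rw [← bracketW_single_single, hρ _ _ _ _ (single_mem_Wpar u) (single_mem_Wpar v)]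
  simp only [LinearMap.sub_apply, Module.End.mul_apply, LinearMap.smul_apply]
  abel

lemma bracketMono_apply_eq_zero (hρ : IsSuperRep ρ) {u v : WIdx m n} {w : V}
    (hu : ρ (Finsupp.single u 1) w = 0) (hv : ρ (Finsupp.single v 1) w = 0) :
    ρ (bracketMono u v) w = 0 := by
  simpa [hu, hv] using (single_apply_single_apply hρ u v w).symm

lemma coeff_smul_apply_single_eq (hρ : IsSuperRep ρ) {β γ : Fin m → ℤ} {w : V}
    (hβ : AnnihilatedBy ρ β w) (hγ : AnnihilatedBy ρ γ w) (i : Fin m) (I : Finset (Fin n))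
    (c : Fin m ⊕ Fin n) :
    (γ i : ℂ) • ρ (Finsupp.single (β + γ, I, c) 1) w =
      dCoeff c β ∅ • ρ (Finsupp.single (β + γ, I, Sum.inl i) 1) w := by
  have h := bracketMono_apply_eq_zero hρ (hβ ∅ (Sum.inl i)) (hγ I c)
  rw [bracketMono_inl_empty, map_sub, map_smul, map_smul] at h
  exact sub_eq_zero.mp h

lemma AnnihilatedBy.add_single (hρ : IsSuperRep ρ) {β : Fin m → ℤ} {j k : Fin m} {w : V}
    (hβ : AnnihilatedBy ρ β w) (hkj : k ≠ j) (hβk : β k ≠ 0)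
    (hj : AnnihilatedBy ρ (Pi.single j 1) w) : AnnihilatedBy ρ (β + Pi.single j 1) w := by
  have hβk' : (β k : ℂ) ≠ 0 := Int.cast_ne_zero.mpr hβk
  -- `[t^{e_j} d_k, t^β ξ_I d_l] = β_k t^{β+e_j} ξ_I d_l` for `l ≠ j`
  have hd : ∀ I l, l ≠ j → ρ (Finsupp.single (β + Pi.single j 1, I, Sum.inl l) 1) w = 0 := by
    intro I l hlj
    have h := coeff_smul_apply_single_eq hρ hj hβ k I (Sum.inl l)
    rw [add_comm] at h
    simp only [dCoeff, Pi.single_eq_of_ne hlj, Int.cast_zero, zero_smul] at h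
    exact (smul_eq_zero.mp h).resolve_left hβk'
  intro I c
  rcases c with l | l
  · by_cases hlj : l = j
    · subst hlj
      -- `[t^β d_l, t^{e_l} ξ_I d_k] = t^{β+e_l} ξ_I d_k - β_k t^{β+e_l} ξ_I d_l`
      have h := coeff_smul_apply_single_eq hρ hβ hj l I (Sum.inl k)
      simp only [Pi.single_eq_same, Int.cast_one, one_smul, hd I k hkj, dCoeff] at h
      exact (smul_eq_zero.mp h.symm).resolve_left hβk'
    · exact hd I l hlj
  · simpa [dCoeff] using coeff_smul_apply_single_eq hρ hβ hj j I (Sum.inr l)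

lemma annihilatedBy_of_forall_one_lt (hρ : IsSuperRep ρ) (hm : 1 < m) {w : V}
    (hw : ∀ j, AnnihilatedBy ρ (Pi.single j 1) w) {α : Fin m → ℤ} (hα : ∀ i, 1 < α i) :
    AnnihilatedBy ρ α w := by
  obtain ⟨i₀, i₁, hne⟩ : ∃ i₀ i₁ : Fin m, i₀ ≠ i₁ :=
    ⟨⟨0, by omega⟩, ⟨1, hm⟩, by simp [Fin.ext_iff]⟩
  let S : Set (Fin m → ℤ) := {β | AnnihilatedBy ρ β w ∧ 0 < β i₀ ∧ 0 < β i₁}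
  have hS : ∀ β ∈ S, ∀ j, β + Pi.single j 1 ∈ S := by
    rintro β ⟨hβ, h₀, h₁⟩ j
    have hpos : ∀ i, 0 < β i → 0 < (β + Pi.single j 1 : Fin m → ℤ) i := fun i hi => by
      simp only [Pi.add_apply, Pi.single_apply]
      split_ifs <;> omega
    refine ⟨?_, hpos i₀ h₀, hpos i₁ h₁⟩
    by_cases hj : j = i₀
    · exact hβ.add_single hρ (hj ▸ hne.symm) h₁.ne' (hw j)
    · exact hβ.add_single hρ (Ne.symm hj) h₀.ne' (hw j)
  have hbase : Pi.single i₀ 1 + Pi.single i₁ 1 ∈ S :=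
    ⟨(hw i₀).add_single hρ hne (by simp) (hw i₁), by simp [Pi.single_eq_of_ne hne],
      by simp [Pi.single_eq_of_ne hne.symm]⟩
  refine (Pi.mem_of_le_of_add_single_mem hS hbase fun i => ?_).1
  have := hα i
  simp only [Pi.add_apply, Pi.single_apply]
  split_ifs <;> omega

lemma single_apply_mem_eventuallyAnnihilated (hρ : IsSuperRep ρ) (u : WIdx m n) {v : V}
    (hv : v ∈ eventuallyAnnihilated ρ) :
    ρ (Finsupp.single u 1) v ∈ eventuallyAnnihilated ρ := by
  obtain ⟨N, hN⟩ := hv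
  set s := ∑ i, (u.1 i).natAbs
  refine ⟨N + s, fun α hα I c => ?_⟩
  have hu : ∀ i, (u.1 i).natAbs ≤ s := fun i =>
    Finset.single_le_sum (f := fun i => (u.1 i).natAbs) (fun _ _ => Nat.zero_le _)
      (Finset.mem_univ i)
  have hα' : ∀ i, (N : ℤ) < α i := fun i => by have := hα i; omega
  have hαu : ∀ i, (N : ℤ) < (α + u.1) i := fun i => by
    have := hα i; have := hu i
    show (N : ℤ) < α i + u.1 i
    omega
  rw [single_apply_single_apply hρ, hN α hα' I c, map_zero, smul_zero, add_zero]
  exact annihilatedBy_iff.1 (hN _ hαu) _ (bracketMono_mem_Wgr (α, I, c) u)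

lemma apply_mem_eventuallyAnnihilated (hρ : IsSuperRep ρ) (x : WSp m n) {v : V}
    (hv : v ∈ eventuallyAnnihilated ρ) : ρ x v ∈ eventuallyAnnihilated ρ := by
  induction x using Finsupp.induction_linear with
  | zero => simp
  | add f g hf hg => simpa using add_mem hf hg
  | single u b =>
    rw [← mul_one b, ← Finsupp.smul_single', map_smul]
    exact Submodule.smul_mem _ _ (single_apply_mem_eventuallyAnnihilated hρ u hv)

section Graded

variable {gV : ZMod 2 → Submodule ℂ V}

lemma annihilatedBy_of_annihilatedBy_add (hcompl : IsCompl (gV 0) (gV 1))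
    (hpar : ∀ (p : ℕ) (x : WSp m n), x ∈ Wpar m n p →
      ∀ q : ZMod 2, ∀ v ∈ gV q, ρ x v ∈ gV (q + (p : ZMod 2)))
    {α : Fin m → ℤ} {v₀ v₁ : V} (h₀ : v₀ ∈ gV 0) (h₁ : v₁ ∈ gV 1)
    (h : AnnihilatedBy ρ α (v₀ + v₁)) : AnnihilatedBy ρ α v₀ := by
  intro I c
  have hdisj : ∀ q : ZMod 2, Disjoint (gV (0 + q)) (gV (1 + q)) := by
    intro q
    fin_cases q
    exacts [hcompl.disjoint, hcompl.disjoint.symm]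
  have hx := single_mem_Wpar (α, I, c)
  have hsum := eq_neg_of_add_eq_zero_left ((map_add _ v₀ v₁).symm.trans (h I c))
  refine Submodule.disjoint_def.1 (hdisj _) _ (hpar _ _ hx 0 v₀ h₀) ?_
  rw [hsum]
  exact neg_mem (hpar _ _ hx 1 v₁ h₁)

lemma eventuallyAnnihilated_eq_sup_inf (hcompl : IsCompl (gV 0) (gV 1))
    (hpar : ∀ (p : ℕ) (x : WSp m n), x ∈ Wpar m n p →
      ∀ q : ZMod 2, ∀ v ∈ gV q, ρ x v ∈ gV (q + (p : ZMod 2))) :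
    eventuallyAnnihilated ρ =
      (eventuallyAnnihilated ρ ⊓ gV 0) ⊔ (eventuallyAnnihilated ρ ⊓ gV 1) := by
  refine le_antisymm (fun v hv => ?_) (sup_le inf_le_left inf_le_left)
  obtain ⟨v₀, h₀, v₁, h₁, rfl⟩ :=
    Submodule.mem_sup.1 (hcompl.sup_eq_top ▸ Submodule.mem_top : v ∈ gV 0 ⊔ gV 1)
  obtain ⟨N, hN⟩ := hv
  have hv₀ : v₀ ∈ eventuallyAnnihilated ρ :=
    ⟨N, fun α hα => annihilatedBy_of_annihilatedBy_add hcompl hpar h₀ h₁ (hN α hα)⟩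
  have hv₁ : v₁ ∈ eventuallyAnnihilated ρ := by
    simpa using sub_mem (show v₀ + v₁ ∈ eventuallyAnnihilated ρ from ⟨N, hN⟩) hv₀
  exact Submodule.add_mem_sup ⟨hv₀, h₀⟩ ⟨hv₁, h₁⟩

end Graded

end Representation

theorem stmt18_general (m n : ℕ) (hm : 1 < m) (V : Type*) [AddCommGroup V] [Module ℂ V]
    (gV : ZMod 2 → Submodule ℂ V) (hcompl : IsCompl (gV 0) (gV 1))
    (ρ : WSp m n →ₗ[ℂ] Module.End ℂ V)
    (hpar : ∀ (p : ℕ) (x : WSp m n), x ∈ Wpar m n p →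
      ∀ q : ZMod 2, ∀ v ∈ gV q, ρ x v ∈ gV (q + (p : ZMod 2)))
    (hrep : ∀ (p q : ℕ) (x y : WSp m n), x ∈ Wpar m n p → y ∈ Wpar m n q →
      ρ (bracketW m n x y) = ρ x * ρ y - ((-1 : ℂ) ^ (p * q)) • (ρ y * ρ x))
    (hsimp : ∀ P : Submodule ℂ V, P = (P ⊓ gV 0) ⊔ (P ⊓ gV 1) →
      (∀ x : WSp m n, ∀ v ∈ P, ρ x v ∈ P) → P = ⊥ ∨ P = ⊤)
    (w : V) (hw0 : w ≠ 0)
    (hann : ∀ i : Fin m, ∀ x ∈ Wgr m n (Pi.single i 1), ρ x w = 0) :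
    ∀ v : V, ∃ N : ℕ, ∀ α : Fin m → ℤ,
      (∀ i : Fin m, (N : ℤ) < α i) → ∀ x ∈ Wgr m n α, ρ x v = 0 := by
  have hw : w ∈ eventuallyAnnihilated ρ := ⟨1, fun α hα =>
    annihilatedBy_of_forall_one_lt hrep hm (fun j => annihilatedBy_iff.2 (hann j)) hα⟩
  obtain hbot | htop := hsimp _ (eventuallyAnnihilated_eq_sup_inf hcompl hpar)
    fun x _ => apply_mem_eventuallyAnnihilated hrep x
  · exact absurd ((Submodule.eq_bot_iff _).1 hbot w hw) hw0
  · intro v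
    obtain ⟨N, hN⟩ : v ∈ eventuallyAnnihilated ρ := htop ▸ Submodule.mem_top
    exact ⟨N, fun α hα => annihilatedBy_iff.1 (hN α hα)⟩

/-- Let `M` be a simple weight module (with respect to the Cartan subalgebra spanned by
`d_1, …, d_m`) over the Witt superalgebra `W = W_{m,n}` (`m > 1`) with
finite-dimensional weight spaces, let `lam ∈ supp M` and let `w` be a nonzero weight
vector of weight `lam` with `W_{e_i} · w = 0` for `i = 1, …, m`.  Then the set
`M' = {v ∈ M : ∃ N, W_α v = 0 whenever all α_i > N}` is a nonzero `W`-submodule of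
`M`, hence equals `M`:  every `v ∈ M` is annihilated by all `W_α` with all `α_i`
sufficiently large. -/
theorem stmt18 (m n : ℕ) (hm : 1 < m) (V : Type*) [AddCommGroup V] [Module ℂ V]
    [Nontrivial V]
    (gV : ZMod 2 → Submodule ℂ V) (hcompl : IsCompl (gV 0) (gV 1))
    (ρ : WSp m n →ₗ[ℂ] Module.End ℂ V)
    (hpar : ∀ (p : ℕ) (x : WSp m n), x ∈ Wpar m n p →
      ∀ q : ZMod 2, ∀ v ∈ gV q, ρ x v ∈ gV (q + (p : ZMod 2)))
    (hrep : ∀ (p q : ℕ) (x y : WSp m n), x ∈ Wpar m n p → y ∈ Wpar m n q →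
      ρ (bracketW m n x y) = ρ x * ρ y - ((-1 : ℂ) ^ (p * q)) • (ρ y * ρ x))
    (hsimp : ∀ P : Submodule ℂ V, P = (P ⊓ gV 0) ⊔ (P ⊓ gV 1) →
      (∀ x : WSp m n, ∀ v ∈ P, ρ x v ∈ P) → P = ⊥ ∨ P = ⊤)
    (hwt : (⨆ μ : Fin m → ℂ, ⨅ i : Fin m, Module.End.eigenspace (ρ (dEl m n i)) (μ i)) = ⊤)
    (hfin : ∀ μ : Fin m → ℂ,
      FiniteDimensional ℂ ↥(⨅ i : Fin m, Module.End.eigenspace (ρ (dEl m n i)) (μ i)))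
    (lam : Fin m → ℂ) (w : V)
    (hw : w ∈ ⨅ i : Fin m, Module.End.eigenspace (ρ (dEl m n i)) (lam i)) (hw0 : w ≠ 0)
    (hann : ∀ i : Fin m, ∀ x ∈ Wgr m n (Pi.single i 1), ρ x w = 0) :
    ∀ v : V, ∃ N : ℕ, ∀ α : Fin m → ℤ,
      (∀ i : Fin m, (N : ℤ) < α i) → ∀ x ∈ Wgr m n α, ρ x v = 0 :=
  stmt18_general m n hm V gV hcompl ρ hpar hrep hsimp w hw0 hann
end
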